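/- Let Δ(λ,q) = φ_{N+2}(λ,q) + θ_{N+1}(λ,q) be the discrete Lyapunov (discriminant) function for an (N+1)-periodic potential q. Then: if N is odd, Δ(λ,q) = Σ_{j=0}^{(N+1)/2} (-1)^{j+(N+1)/2} G_{2j}^{N+1}(λ,q); if N is even, Δ(λ,q) = Σ_{j=0}^{N/2} (-1)^{j+N/2} G_{2j+1}^{N+1}(λ,q). -/

import Mathlib

/-- The predicate describing membership in `D_j^n`: `α` is strictly increasing,
`1 ≤ α s ≤ n`, and the consecutive differences `α (s+1) - α s` are odd for
`s = 1, ..., j-1`. -/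
def isD (j n : ℕ) (α : Fin j → ℕ) : Prop :=
  StrictMono α ∧ (∀ s, 1 ≤ α s ∧ α s ≤ n) ∧
    ∀ (s : Fin j) (h : (s : ℕ) + 1 < j), Odd ((α ⟨(s : ℕ) + 1, h⟩ : ℤ) - (α s : ℤ))

open Classical in
/-- `Gpoly j n lam q = G_j^n(λ,q) = Σ_{α ∈ D_j^n} Π_{s=1}^j (λ - q (α s))`,
with `G_0^n = 2`. -/
noncomputable def Gpoly (j n : ℕ) (lam : ℂ) (q : ℕ → ℂ) : ℂ :=
  if j = 0 then 2
  else ∑ β : Fin j → Fin (n + 2),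
    if isD j n (fun s => (β s : ℕ)) then ∏ s, (lam - q (β s)) else 0

/-- Fundamental solution `φ` with `φ_0 = 0`, `φ_1 = 1`,
`φ_{n+1} = (λ - q_n) φ_n - φ_{n-1}`. -/
noncomputable def phi (lam : ℂ) (q : ℕ → ℂ) : ℕ → ℂ
  | 0 => 0
  | 1 => 1
  | n + 2 => (lam - q (n + 1)) * phi lam q (n + 1) - phi lam q n

/-- Fundamental solution `θ` with `θ_0 = 1`, `θ_1 = 0`,
`θ_{n+1} = (λ - q_n) θ_n - θ_{n-1}`. -/
noncomputable def theta (lam : ℂ) (q : ℕ → ℂ) : ℕ → ℂ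
  | 0 => 1
  | 1 => 0
  | n + 2 => (lam - q (n + 1)) * theta lam q (n + 1) - theta lam q n

/-- The Lyapunov (discriminant) function `Δ(λ,q) = φ_{N+2}(λ,q) + θ_{N+1}(λ,q)`
for an `(N+1)`-periodic potential. -/
noncomputable def Delta (N : ℕ) (lam : ℂ) (q : ℕ → ℂ) : ℂ :=
  phi lam q (N + 2) + theta lam q (N + 1)

/-!
Expanding the three-term recurrence, `φ_{n+1}` is a sum over the monomer–dimer coverings of the
path `1, …, n` (a monomer at `x` has weight `λ - q_x`, a dimer weight `-1`), and `θ_{n+1}` is the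
same sum over the coverings of the cycle `ℤ/n` that use the dimer `{n, 1}`. Hence `Δ` is the sum
over all monomer–dimer coverings of the cycle with `n = N + 1` sites. The monomer positions
`α_1 < … < α_j` of a covering leave gaps of even length, i.e. consecutive differences are odd and
`j ≡ n (mod 2)`; conversely such positions determine the covering uniquely if `j > 0`, while for
`j = 0` there are two coverings, whence `G_0 = 2`. Grouping by `j`, the `(n - j)/2` dimers give
the sign.
-/

open Finset

theorem Finset.powerset_map {α β : Type*} (f : α ↪ β) (s : Finset α) :
    (s.map f).powerset = s.powerset.map (mapEmbedding f).toEmbedding := by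
  ext t
  simp only [mem_powerset, mem_map, RelEmbedding.coe_toEmbedding, mapEmbedding_apply,
    subset_map_iff]
  exact ⟨fun ⟨u, hu, h⟩ => ⟨u, hu, h.symm⟩, fun ⟨u, hu, h⟩ => ⟨u, hu, h.symm⟩⟩

theorem Finset.sum_range_filter_mod_two_eq {M : Type*} [AddCommMonoid M] (n : ℕ) (f : ℕ → M) :
    ∑ j ∈ range (n + 1) with j % 2 = n % 2, f j = ∑ i ∈ range (n / 2 + 1), f (2 * i + n % 2) := by
  have himage : {j ∈ range (n + 1) | j % 2 = n % 2} =
      (range (n / 2 + 1)).image fun i => 2 * i + n % 2 := by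
    ext j
    simp only [mem_filter, mem_range, mem_image]
    constructor
    · exact fun h => ⟨j / 2, by omega, by omega⟩
    · rintro ⟨i, hi, rfl⟩
      omega
  rw [himage, sum_image fun a _ b _ h => by omega]

namespace MonomerDimer

def rankBelow (A : Finset ℕ) (x : ℕ) : ℕ := #{y ∈ A | y < x}

theorem rankBelow_eq_zero {A : Finset ℕ} {x : ℕ} (h : ∀ y ∈ A, x ≤ y) : rankBelow A x = 0 := by
  rw [rankBelow, card_eq_zero, filter_eq_empty_iff]
  exact fun y hy => (h y hy).not_gt

theorem rankBelow_add_one {A : Finset ℕ} {x : ℕ} (hx : x ∈ A) (h : ∀ y ∈ A, y ≤ x) :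
    rankBelow A x + 1 = #A := by
  have : {y ∈ A | y < x} = A.erase x := by
    ext y
    simp only [mem_filter, mem_erase]
    exact ⟨fun ⟨hy, hlt⟩ => ⟨hlt.ne, hy⟩, fun ⟨hne, hy⟩ => ⟨hy, lt_of_le_of_ne (h y hy) hne⟩⟩
  rw [rankBelow, this, card_erase_add_one hx]

theorem rankBelow_insert_of_lt {A : Finset ℕ} {a x : ℕ} (hx : x < a) :
    rankBelow (insert a A) x = rankBelow A x := by
  rw [rankBelow, filter_insert, if_neg hx.not_gt, rankBelow]

theorem rankBelow_map_succ (A : Finset ℕ) (x : ℕ) :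
    rankBelow (A.map (addRightEmbedding 1)) (x + 1) = rankBelow A x := by
  simp [rankBelow, filter_map]

theorem rankBelow_image_of_strictMono {j : ℕ} {f : Fin j → ℕ} (hf : StrictMono f) (s : Fin j) :
    rankBelow (univ.image f) (f s) = s := by
  rw [rankBelow, filter_image, card_image_of_injective _ hf.injective]
  simp only [hf.lt_iff_lt, ← Fin.card_Iio]
  congr 1
  ext; simp

/-- In an alternating set consecutive elements differ by an odd number and the least element
has parity `ε`. -/
def IsAlternating (ε : ℕ) (A : Finset ℕ) : Prop := ∀ x ∈ A, (x + rankBelow A x) % 2 = ε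

instance (ε : ℕ) : DecidablePred (IsAlternating ε) := fun A => by
  unfold IsAlternating; infer_instance

theorem isAlternating_insert_iff {ε a : ℕ} {A : Finset ℕ} (ha : ∀ x ∈ A, x < a) :
    IsAlternating ε (insert a A) ↔ IsAlternating ε A ∧ (a + #A) % 2 = ε := by
  have hmax : rankBelow (insert a A) a + 1 = #A + 1 := by
    rw [rankBelow_add_one (mem_insert_self a A), card_insert_of_notMem fun h => (ha a h).false]
    rintro y hy
    rcases mem_insert.1 hy with rfl | hy
    exacts [le_rfl, (ha y hy).le]
  simp only [IsAlternating, forall_mem_insert, Nat.add_right_cancel hmax]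
  rw [and_comm]
  refine and_congr_left' (forall₂_congr fun x hx => ?_)
  rw [rankBelow_insert_of_lt (ha x hx)]

theorem isAlternating_map_succ_iff {A : Finset ℕ} :
    IsAlternating 0 (A.map (addRightEmbedding 1)) ↔ IsAlternating 1 A := by
  simp only [IsAlternating, forall_mem_map, addRightEmbedding_apply, rankBelow_map_succ]
  exact forall₂_congr fun x _ => by omega

theorem isAlternating_image_iff {ε j : ℕ} {f : Fin j → ℕ} (hf : StrictMono f) :
    IsAlternating ε (univ.image f) ↔ ∀ s, (f s + s) % 2 = ε := by
  simp [IsAlternating, rankBelow_image_of_strictMono hf]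

theorem odd_succ_sub_iff {j : ℕ} {f : Fin j → ℕ} :
    (∀ (s : Fin j) (h : (s : ℕ) + 1 < j), Odd ((f ⟨(s : ℕ) + 1, h⟩ : ℤ) - (f s : ℤ))) ↔
      (∀ s, (f s + s) % 2 = 0) ∨ (∀ s, (f s + s) % 2 = 1) := by
  constructor
  · intro hodd
    rcases j with _ | j
    · exact Or.inl fun s => s.elim0
    have hconst : ∀ k (hk : k < j + 1), (f ⟨k, hk⟩ + k) % 2 = f 0 % 2 := by
      intro k
      induction k with
      | zero => exact fun _ => rfl
      | succ k ih =>
        intro hk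
        have hstep : Odd ((f ⟨k + 1, hk⟩ : ℤ) - f ⟨k, by omega⟩) := hodd ⟨k, by omega⟩ hk
        rw [Int.odd_iff] at hstep
        have := ih (by omega)
        omega
    rcases Nat.mod_two_eq_zero_or_one (f 0) with h | h
    · exact Or.inl fun s => (hconst s s.isLt).trans h
    · exact Or.inr fun s => (hconst s s.isLt).trans h
  · rintro (h | h) s hs <;>
    · have h₀ := h s
      have h₁ := h ⟨s + 1, hs⟩
      simp only at h₁
      rw [Int.odd_iff]
      omega

variable (lam : ℂ) (q : ℕ → ℂ)

/-- `A` is the set of monomer sites; the condition says that the rest of `[1, n]` is covered by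
dimers, of the path `1, …, n` if `ε = 1`, and of the cycle `ℤ/n` using the dimer `{n, 1}` if
`ε = 0`. -/
noncomputable def chainTerm (ε n : ℕ) (A : Finset ℕ) : ℂ :=
  if #A % 2 = n % 2 ∧ IsAlternating ε A then (-1) ^ ((n - #A) / 2) * ∏ x ∈ A, (lam - q x) else 0

noncomputable def chainSum (ε n : ℕ) : ℂ := ∑ A ∈ (Icc 1 n).powerset, chainTerm lam q ε n A

theorem card_le_of_subset_Icc {A : Finset ℕ} {n : ℕ} (hA : A ⊆ Icc 1 n) : #A ≤ n :=
  (card_le_card hA).trans (by simp)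

theorem chainTerm_add_two {ε n : ℕ} {A : Finset ℕ} (hA : #A ≤ n) :
    chainTerm lam q ε (n + 2) A = -chainTerm lam q ε n A := by
  have hsign : (n + 2 - #A) / 2 = (n - #A) / 2 + 1 := by omega
  simp only [chainTerm, Nat.add_mod_right, hsign, pow_succ]
  split_ifs <;> ring

theorem chainTerm_one_insert {n : ℕ} {A : Finset ℕ} (hA : A ⊆ Icc 1 n) :
    chainTerm lam q 1 (n + 1) (insert (n + 1) A) = (lam - q (n + 1)) * chainTerm lam q 1 n A := by
  have hlt : ∀ x ∈ A, x < n + 1 := fun x hx => Nat.lt_succ_of_le (mem_Icc.1 (hA hx)).2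
  have hnotMem : n + 1 ∉ A := fun h => (hlt _ h).false
  have hcond : (#A + 1) % 2 = (n + 1) % 2 ∧ IsAlternating 1 (insert (n + 1) A) ↔
      #A % 2 = n % 2 ∧ IsAlternating 1 A := by
    rw [isAlternating_insert_iff hlt, show (n + 1 + #A) % 2 = 1 ↔ #A % 2 = n % 2 by omega,
      show (#A + 1) % 2 = (n + 1) % 2 ↔ #A % 2 = n % 2 by omega]
    tauto
  simp only [chainTerm, card_insert_of_notMem hnotMem, hcond, prod_insert hnotMem,
    Nat.add_sub_add_right]
  split_ifs <;> ring

theorem chainTerm_one_insert_eq_zero {n : ℕ} {A : Finset ℕ} (hA : A ⊆ Icc 1 n) :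
    chainTerm lam q 1 (n + 2) (insert (n + 1) A) = 0 := by
  have hlt : ∀ x ∈ A, x < n + 1 := fun x hx => Nat.lt_succ_of_le (mem_Icc.1 (hA hx)).2
  rw [chainTerm, if_neg]
  rw [card_insert_of_notMem fun h => (hlt _ h).false, isAlternating_insert_iff hlt]
  rintro ⟨hcard, -, hpar⟩
  omega

theorem chainTerm_zero_map_succ (n : ℕ) (A : Finset ℕ) :
    chainTerm lam q 0 n (A.map (addRightEmbedding 1)) =
      chainTerm lam (fun k => q (k + 1)) 1 n A := by
  simp [chainTerm, isAlternating_map_succ_iff]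

theorem chainTerm_zero_eq_zero_of_not_subset {n : ℕ} {B : Finset ℕ} (hB : B ⊆ Icc 1 (n + 2))
    (hB' : ¬B ⊆ Icc 2 (n + 1)) : chainTerm lam q 0 (n + 2) B = 0 := by
  obtain ⟨x, hxB, hx⟩ := not_subset.1 hB'
  have hx' := mem_Icc.1 (hB hxB)
  rw [chainTerm, if_neg]
  rintro ⟨hcard, halt⟩
  have hpar := halt x hxB
  rcases (show x = 1 ∨ x = n + 2 by simp only [mem_Icc] at hx; omega) with rfl | rfl
  · rw [rankBelow_eq_zero fun y hy => (mem_Icc.1 (hB hy)).1] at hpar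
    omega
  · have := rankBelow_add_one hxB fun y hy => (mem_Icc.1 (hB hy)).2
    omega

@[simp]
theorem chainSum_zero (ε : ℕ) : chainSum lam q ε 0 = 1 := by
  simp [chainSum, chainTerm, IsAlternating]

theorem chainSum_one_one : chainSum lam q 1 1 = lam - q 1 := by
  rw [chainSum, Icc_self, show ({1} : Finset ℕ).powerset = {∅, {1}} from rfl]
  simp [chainTerm, IsAlternating, rankBelow, filter_singleton]

theorem chainSum_zero_one : chainSum lam q 0 1 = 0 := by
  rw [chainSum, Icc_self, show ({1} : Finset ℕ).powerset = {∅, {1}} from rfl]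
  simp [chainTerm, IsAlternating, rankBelow, filter_singleton]

theorem chainSum_one_add_two (m : ℕ) :
    chainSum lam q 1 (m + 2) =
      (lam - q (m + 2)) * chainSum lam q 1 (m + 1) - chainSum lam q 1 m := by
  have hIcc (k : ℕ) : Icc 1 (k + 1) = insert (k + 1) (Icc 1 k) :=
    (insert_Icc_right_eq_Icc_add_one (by omega)).symm
  have hnotMem (k : ℕ) : k + 1 ∉ Icc 1 k := by simp
  calc chainSum lam q 1 (m + 2)
      = (∑ A ∈ (Icc 1 m).powerset, chainTerm lam q 1 (m + 2) A
          + ∑ A ∈ (Icc 1 m).powerset, chainTerm lam q 1 (m + 2) (insert (m + 1) A))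
        + ∑ A ∈ (Icc 1 (m + 1)).powerset, chainTerm lam q 1 (m + 2) (insert (m + 2) A) := by
        rw [chainSum, hIcc (m + 1), sum_powerset_insert (hnotMem _), hIcc m,
          sum_powerset_insert (hnotMem _)]
    _ = -chainSum lam q 1 m + 0 + (lam - q (m + 2)) * chainSum lam q 1 (m + 1) := by
        rw [chainSum, chainSum, mul_sum, ← sum_neg_distrib]
        congr 1
        · congr 1
          · exact sum_congr rfl fun A hA =>
              chainTerm_add_two lam q (card_le_of_subset_Icc (mem_powerset.1 hA))
          · exact sum_eq_zero fun A hA => chainTerm_one_insert_eq_zero lam q (mem_powerset.1 hA)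
        · exact sum_congr rfl fun A hA => chainTerm_one_insert lam q (mem_powerset.1 hA)
    _ = (lam - q (m + 2)) * chainSum lam q 1 (m + 1) - chainSum lam q 1 m := by ring

theorem chainSum_zero_add_two (n : ℕ) :
    chainSum lam q 0 (n + 2) = -chainSum lam (fun k => q (k + 1)) 1 n := by
  calc chainSum lam q 0 (n + 2)
      = ∑ B ∈ (Icc 2 (n + 1)).powerset, chainTerm lam q 0 (n + 2) B :=
        (sum_subset (powerset_mono.2 (Icc_subset_Icc (by omega) (by omega))) fun B hB hB' =>
          chainTerm_zero_eq_zero_of_not_subset lam q (mem_powerset.1 hB)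
            (mt mem_powerset.2 hB')).symm
    _ = ∑ A ∈ (Icc 1 n).powerset, chainTerm lam q 0 (n + 2) (A.map (addRightEmbedding 1)) := by
        rw [show Icc 2 (n + 1) = (Icc 1 n).map (addRightEmbedding 1) by simp, powerset_map,
          sum_map]
        rfl
    _ = -chainSum lam (fun k => q (k + 1)) 1 n := by
        rw [chainSum, ← sum_neg_distrib]
        refine sum_congr rfl fun A hA => ?_
        rw [chainTerm_zero_map_succ,
          chainTerm_add_two _ _ (card_le_of_subset_Icc (mem_powerset.1 hA))]

noncomputable def alternatingSum (ε j n : ℕ) : ℂ :=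
  ∑ A ∈ (Icc 1 n).powersetCard j with IsAlternating ε A, ∏ x ∈ A, (lam - q x)

theorem chainSum_eq_sum_alternatingSum (ε n : ℕ) :
    chainSum lam q ε n = ∑ j ∈ range (n + 1) with j % 2 = n % 2,
      (-1) ^ ((n - j) / 2) * alternatingSum lam q ε j n := by
  rw [chainSum, sum_powerset, Nat.card_Icc, Nat.add_sub_cancel, sum_filter]
  refine sum_congr rfl fun j _ => ?_
  have hcard : ∀ A ∈ (Icc 1 n).powersetCard j, #A = j := fun A hA => (mem_powersetCard.1 hA).2
  split_ifs with hj
  · rw [alternatingSum, mul_sum, sum_filter]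
    exact sum_congr rfl fun A hA => by simp [chainTerm, hcard A hA, hj]
  · exact sum_eq_zero fun A hA => by simp [chainTerm, hcard A hA, hj]

end MonomerDimer

open MonomerDimer

theorem phi_succ_eq_chainSum (lam : ℂ) (q : ℕ → ℂ) (n : ℕ) :
    phi lam q (n + 1) = chainSum lam q 1 n := by
  induction n using Nat.twoStepInduction with
  | zero => simp [phi]
  | one => simp [phi, chainSum_one_one]
  | more m ih₀ ih₁ => rw [chainSum_one_add_two, ← ih₀, ← ih₁, phi]

theorem theta_succ_eq_neg_phi (lam : ℂ) (q : ℕ → ℂ) (n : ℕ) :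
    theta lam q (n + 1) = -phi lam (fun k => q (k + 1)) n := by
  induction n using Nat.twoStepInduction with
  | zero => simp [theta, phi]
  | one => simp [theta, phi]
  | more m ih₀ ih₁ => rw [theta, ih₀, ih₁, phi]; ring

theorem theta_succ_eq_chainSum (lam : ℂ) (q : ℕ → ℂ) (n : ℕ) :
    theta lam q (n + 1) = chainSum lam q 0 (n + 1) := by
  cases n with
  | zero => simp [theta, chainSum_zero_one]
  | succ m => rw [theta_succ_eq_neg_phi, phi_succ_eq_chainSum, chainSum_zero_add_two]

theorem isD_iff {j n : ℕ} {f : Fin j → ℕ} :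
    isD j n f ↔ StrictMono f ∧ (∀ s, f s ∈ Icc 1 n) ∧
      (IsAlternating 0 (univ.image f) ∨ IsAlternating 1 (univ.image f)) := by
  simp only [isD, mem_Icc]
  refine and_congr_right fun hf => and_congr_right fun _ => ?_
  rw [isAlternating_image_iff hf, isAlternating_image_iff hf, odd_succ_sub_iff]

theorem Gpoly_eq_sum_powersetCard (lam : ℂ) (q : ℕ → ℂ) {j : ℕ} (hj : j ≠ 0) (n : ℕ) :
    Gpoly j n lam q = ∑ A ∈ (Icc 1 n).powersetCard j with
      (IsAlternating 0 A ∨ IsAlternating 1 A), ∏ x ∈ A, (lam - q x) := by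
  classical
  rw [Gpoly, if_neg hj, ← sum_filter]
  refine sum_bij (fun β _ => univ.image fun s => (β s : ℕ)) ?_ ?_ ?_ ?_
  · intro β hβ
    obtain ⟨hmono, hbd, halt⟩ := isD_iff.1 (mem_filter.1 hβ).2
    rw [mem_filter, mem_powersetCard, card_image_of_injective _ hmono.injective, card_univ,
      Fintype.card_fin]
    refine ⟨⟨fun x hx => ?_, rfl⟩, halt⟩
    obtain ⟨s, -, rfl⟩ := mem_image.1 hx
    exact hbd s
  · intro β₁ hβ₁ β₂ hβ₂ h
    have hmono₁ := (isD_iff.1 (mem_filter.1 hβ₁).2).1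
    have hmono₂ := (isD_iff.1 (mem_filter.1 hβ₂).2).1
    have hrange := congrArg (fun A : Finset ℕ => (A : Set ℕ)) h
    simp only [coe_image, coe_univ, Set.image_univ] at hrange
    funext s
    exact Fin.ext (congrFun ((hmono₁.range_inj hmono₂).1 hrange) s)
  · intro A hA
    obtain ⟨⟨hsub, hcard⟩, halt⟩ := (mem_filter.1 hA).imp_left mem_powersetCard.1
    set g := A.orderEmbOfFin hcard
    have hbd : ∀ s, g s ∈ Icc 1 n := fun s => hsub (orderEmbOfFin_mem A hcard s)
    have himage : univ.image g = A := image_orderEmbOfFin_univ A hcard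
    refine ⟨fun s => ⟨g s, by have := (mem_Icc.1 (hbd s)).2; omega⟩, ?_, himage⟩
    exact mem_filter.2 ⟨mem_univ _, isD_iff.2 ⟨g.strictMono, hbd, by rwa [himage]⟩⟩
  · intro β hβ
    rw [prod_image fun s _ t _ h => (isD_iff.1 (mem_filter.1 hβ).2).1.injective h]

theorem Gpoly_eq_alternatingSum_add (lam : ℂ) (q : ℕ → ℂ) (j n : ℕ) :
    Gpoly j n lam q = alternatingSum lam q 0 j n + alternatingSum lam q 1 j n := by
  rcases eq_or_ne j 0 with rfl | hj
  · norm_num [Gpoly, alternatingSum, IsAlternating, filter_singleton]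
  rw [Gpoly_eq_sum_powersetCard lam q hj, filter_or, sum_union, alternatingSum, alternatingSum]
  rw [disjoint_filter]
  intro A hA h₀ h₁
  obtain ⟨x, hx⟩ := card_pos.1 ((mem_powersetCard.1 hA).2.symm ▸ Nat.pos_of_ne_zero hj)
  have := h₀ x hx
  have := h₁ x hx
  omega

theorem Delta_eq_sum_filter_Gpoly (lam : ℂ) (q : ℕ → ℂ) (N : ℕ) :
    Delta N lam q = ∑ j ∈ range (N + 1 + 1) with j % 2 = (N + 1) % 2,
      (-1) ^ ((N + 1 - j) / 2) * Gpoly j (N + 1) lam q := by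
  rw [Delta, phi_succ_eq_chainSum, theta_succ_eq_chainSum, chainSum_eq_sum_alternatingSum,
    chainSum_eq_sum_alternatingSum, ← sum_add_distrib]
  exact sum_congr rfl fun j _ => by rw [Gpoly_eq_alternatingSum_add]; ring

theorem Delta_eq_sum_range_Gpoly (lam : ℂ) (q : ℕ → ℂ) (N : ℕ) :
    Delta N lam q = ∑ i ∈ range ((N + 1) / 2 + 1),
      (-1) ^ (i + (N + 1) / 2) * Gpoly (2 * i + (N + 1) % 2) (N + 1) lam q := by
  rw [Delta_eq_sum_filter_Gpoly, sum_range_filter_mod_two_eq]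
  refine sum_congr rfl fun i hi => ?_
  have := mem_range.1 hi
  rw [neg_one_pow_eq_pow_mod_two, neg_one_pow_eq_pow_mod_two (i + _)]
  congr 2
  omega

theorem Delta_eq_sum_Gpoly (N : ℕ) (lam : ℂ) (q : ℕ → ℂ) :
    (Odd N → Delta N lam q
      = ∑ j ∈ Finset.range ((N + 1) / 2 + 1),
          (-1 : ℂ) ^ (j + (N + 1) / 2) * Gpoly (2 * j) (N + 1) lam q) ∧
    (Even N → Delta N lam q
      = ∑ j ∈ Finset.range (N / 2 + 1),
          (-1 : ℂ) ^ (j + N / 2) * Gpoly (2 * j + 1) (N + 1) lam q) := by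
  refine ⟨fun hN => ?_, fun hN => ?_⟩
  · have hpar : (N + 1) % 2 = 0 := by rcases hN with ⟨k, rfl⟩; omega
    rw [Delta_eq_sum_range_Gpoly, hpar]
    simp only [add_zero]
  · have hpar : (N + 1) % 2 = 1 := by rcases hN with ⟨k, rfl⟩; omega
    have hhalf : (N + 1) / 2 = N / 2 := by rcases hN with ⟨k, rfl⟩; omega
    rw [Delta_eq_sum_range_Gpoly, hpar, hhalf]
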